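/- arXiv:1405.5619 — 2 statements merged into one kernel-verified Lean document; each statement's English description precedes it below -/
import Mathlib

section
/- Let {a_n; n ≥ 1} be a sequence of real numbers and {c_n; n ≥ 1} a sequence of positive real numbers with lim_{n→∞} c_n = ∞. Then for a constant −∞ < β < ∞ one has liminf_{n→∞} |a_n|^{1/c_n} = e^β if and only if liminf_{n→∞} |a_n| / e^{b c_n} = 0 for all b > β and liminf_{n→∞} |a_n| / e^{b c_n} = ∞ for all b < β. -/
/-!
Since `|a|^{1/c} < e^b ↔ |a| / e^{bc} < 1`, the inequality `liminf |a_n|^{1/c_n} ≤ e^β` says that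
`|a_n| / e^{b c_n} < 1` frequently for every `b > β`, and `e^β ≤ liminf |a_n|^{1/c_n}` says that
`|a_n| / e^{b c_n} > 1` eventually for every `b < β`. Passing from `b` to a slightly larger
(resp. smaller) `b'` multiplies the ratio by `e^{(b' - b) c_n}`, which tends to `0` (resp. `∞`)
as `c_n → ∞`; this upgrades "`< 1` frequently" to "liminf `= 0`" and "`> 1` eventually" to
"liminf `= ∞`".
-/

open Filter Real

lemma rpow_inv_lt_exp_iff_div_lt_one {x c : ℝ} (b : ℝ) (hx : 0 ≤ x) (hc : 0 < c) :
    x ^ c⁻¹ < exp b ↔ x / exp (b * c) < 1 := by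
  rw [div_lt_one (exp_pos _), exp_mul, rpow_inv_lt_iff_of_pos hx (exp_pos b).le hc]

lemma exp_lt_rpow_inv_iff_one_lt_div {x c : ℝ} (b : ℝ) (hx : 0 ≤ x) (hc : 0 < c) :
    exp b < x ^ c⁻¹ ↔ 1 < x / exp (b * c) := by
  rw [one_lt_div (exp_pos _), exp_mul, lt_rpow_inv_iff_of_pos (exp_pos b).le hx hc]

lemma div_exp_mul_eq_div_exp_mul_exp (x b b' c : ℝ) :
    x / exp (b * c) = x / exp (b' * c) * exp ((b' - b) * c) := by
  rw [sub_mul, exp_sub]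
  field_simp

namespace EReal

variable {ι : Type*} {l : Filter ι} {u : ι → EReal} {β : ℝ}

lemma liminf_le_coe_exp_iff :
    liminf u l ≤ (Real.exp β : EReal) ↔
      ∀ b, β < b → ∃ᶠ i in l, u i < (Real.exp b : EReal) := by
  rw [liminf_le_iff]
  refine ⟨fun h b hb => h _ (EReal.coe_lt_coe_iff.2 (Real.exp_lt_exp.2 hb)), fun h y hy => ?_⟩
  obtain ⟨r, hβr, hry⟩ := exists_between_coe_real hy
  rw [EReal.coe_lt_coe_iff] at hβr
  have hr : 0 < r := (Real.exp_pos β).trans hβr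
  refine (h (Real.log r) ((Real.lt_log_iff_exp_lt hr).2 hβr)).mono fun i hi => ?_
  rw [Real.exp_log hr] at hi
  exact hi.trans hry

lemma coe_exp_le_liminf_iff :
    (Real.exp β : EReal) ≤ liminf u l ↔
      ∀ b, b < β → ∀ᶠ i in l, (Real.exp b : EReal) < u i := by
  rw [le_liminf_iff]
  refine ⟨fun h b hb => h _ (EReal.coe_lt_coe_iff.2 (Real.exp_lt_exp.2 hb)), fun h y hy => ?_⟩
  obtain ⟨r, hyr, hrβ⟩ := exists_between_coe_real hy
  -- enlarging `r` keeps it below `exp β` and makes it positive, so that it has a logarithm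
  set r' := max r (Real.exp (β - 1))
  have hr' : 0 < r' := (Real.exp_pos _).trans_le (le_max_right _ _)
  have hr'β : r' < Real.exp β :=
    max_lt (EReal.coe_lt_coe_iff.1 hrβ) (Real.exp_lt_exp.2 (by linarith))
  refine (h (Real.log r') ((Real.log_lt_iff_lt_exp hr').2 hr'β)).mono fun i hi => ?_
  rw [Real.exp_log hr'] at hi
  exact hyr.trans_le (EReal.coe_le_coe_iff.2 (le_max_left _ _)) |>.trans hi

end EReal

section RatioToExp

variable {ι : Type*} {l : Filter ι} {x c : ι → ℝ} {β : ℝ}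

lemma liminf_div_exp_eq_zero_of_frequently {b b' : ℝ} (hx : ∀ i, 0 ≤ x i)
    (hc : Tendsto c l atTop) (hb' : b' < b) (h : ∃ᶠ i in l, x i / exp (b' * c i) < 1) :
    liminf (fun i => ((x i / exp (b * c i) : ℝ) : EReal)) l = 0 := by
  refine le_antisymm ?_ (le_liminf_of_le (by isBoundedDefault) (.of_forall fun i =>
    EReal.coe_nonneg.2 (div_nonneg (hx i) (exp_pos _).le)))
  rw [liminf_le_iff]
  intro y hy
  obtain ⟨ε, hε, hεy⟩ := EReal.exists_between_coe_real hy
  have hsmall : ∀ᶠ i in l, exp ((b' - b) * c i) < ε :=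
    (tendsto_exp_atBot.comp (hc.const_mul_atTop_of_neg (sub_neg.2 hb'))).eventually
      (gt_mem_nhds (EReal.coe_pos.1 hε))
  refine (h.and_eventually hsmall).mono fun i ⟨hi, hsmall⟩ => ?_
  refine lt_trans (EReal.coe_lt_coe_iff.2 ?_) hεy
  calc x i / exp (b * c i) = x i / exp (b' * c i) * exp ((b' - b) * c i) :=
        div_exp_mul_eq_div_exp_mul_exp _ _ _ _
    _ < exp ((b' - b) * c i) := mul_lt_of_lt_one_left (exp_pos _) hi
    _ < ε := hsmall

lemma liminf_div_exp_eq_top_of_eventually {b b' : ℝ} (hc : Tendsto c l atTop) (hb' : b < b')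
    (h : ∀ᶠ i in l, 1 < x i / exp (b' * c i)) :
    liminf (fun i => ((x i / exp (b * c i) : ℝ) : EReal)) l = ⊤ := by
  rw [eq_top_iff, le_liminf_iff]
  intro y hy
  obtain ⟨M, hyM, -⟩ := EReal.exists_between_coe_real hy
  have hlarge : ∀ᶠ i in l, M < exp ((b' - b) * c i) :=
    (tendsto_exp_atTop.comp (hc.const_mul_atTop (sub_pos.2 hb'))).eventually_gt_atTop M
  filter_upwards [h, hlarge] with i hi hlarge
  refine hyM.trans (EReal.coe_lt_coe_iff.2 ?_)
  calc M < exp ((b' - b) * c i) := hlarge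
    _ < x i / exp (b' * c i) * exp ((b' - b) * c i) := lt_mul_of_one_lt_left (exp_pos _) hi
    _ = x i / exp (b * c i) := (div_exp_mul_eq_div_exp_mul_exp _ _ _ _).symm

lemma forall_liminf_div_exp_eq_zero_iff (hx : ∀ i, 0 ≤ x i) (hc : Tendsto c l atTop) :
    (∀ b, β < b → liminf (fun i => ((x i / exp (b * c i) : ℝ) : EReal)) l = 0) ↔
      ∀ b, β < b → ∃ᶠ i in l, x i / exp (b * c i) < 1 := by
  refine ⟨fun h b hb => ?_, fun h b hb => ?_⟩
  · refine (frequently_lt_of_liminf_lt (by isBoundedDefault) ?_).mono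
      fun i hi => EReal.coe_lt_coe_iff.1 hi
    rw [h b hb]
    exact EReal.coe_lt_coe_iff.2 one_pos
  · obtain ⟨b', hβb', hb'b⟩ := exists_between hb
    exact liminf_div_exp_eq_zero_of_frequently hx hc hb'b (h b' hβb')

lemma forall_liminf_div_exp_eq_top_iff (hc : Tendsto c l atTop) :
    (∀ b, b < β → liminf (fun i => ((x i / exp (b * c i) : ℝ) : EReal)) l = ⊤) ↔
      ∀ b, b < β → ∀ᶠ i in l, 1 < x i / exp (b * c i) := by
  refine ⟨fun h b hb => ?_, fun h b hb => ?_⟩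
  · refine (eventually_lt_of_lt_liminf ?_ (by isBoundedDefault)).mono
      fun i hi => EReal.coe_lt_coe_iff.1 hi
    rw [h b hb]
    exact EReal.coe_lt_top 1
  · obtain ⟨b', hbb', hb'β⟩ := exists_between hb
    exact liminf_div_exp_eq_top_of_eventually hc hbb' (h b' hb'β)

end RatioToExp

/-- **Lemma 3.1(ii)** (Li–Chen). For a real sequence `a_n` and positive reals `c_n → ∞`,
and a constant `β ∈ ℝ`: `liminf |a_n|^{1/c_n} = e^β` iff `liminf |a_n|/e^{b c_n} = 0`
for all `b > β` and `liminf |a_n|/e^{b c_n} = ∞` for all `b < β`. -/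
theorem stmt_14 (a : ℕ → ℝ) (c : ℕ → ℝ) (hc : ∀ n, 0 < c n)
    (hc' : Tendsto c atTop atTop) (β : ℝ) :
    (Filter.liminf (fun n => ((|a n| ^ (c n)⁻¹ : ℝ) : EReal)) atTop
        = ((Real.exp β : ℝ) : EReal))
    ↔ ((∀ b : ℝ, β < b →
          Filter.liminf (fun n => ((|a n| / Real.exp (b * c n) : ℝ) : EReal)) atTop
            = ((0 : ℝ) : EReal)) ∧
        (∀ b : ℝ, b < β →
          Filter.liminf (fun n => ((|a n| / Real.exp (b * c n) : ℝ) : EReal)) atTop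
            = (⊤ : EReal))) := by
  have hx : ∀ n, 0 ≤ |a n| := fun n => abs_nonneg (a n)
  rw [le_antisymm_iff, EReal.liminf_le_coe_exp_iff, EReal.coe_exp_le_liminf_iff, EReal.coe_zero,
    forall_liminf_div_exp_eq_zero_iff hx hc', forall_liminf_div_exp_eq_top_iff hc']
  simp only [EReal.coe_lt_coe_iff, rpow_inv_lt_exp_iff_div_lt_one _ (hx _) (hc _),
    exp_lt_rpow_inv_iff_one_lt_div _ (hx _) (hc _)]
end

section
/- Let b ∈ ℝ and let {X_n; n ≥ 1} be a sequence of independent copies of a real-valued random variable X with E( X² / (L|X|)^{2b} ) = ∞, and set S_n = X_1 + ⋯ + X_n. Then limsup_{n→∞} |S_n| / (√n (log n)^b) = ∞ almost surely. -/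
/-!
Put `f x = x ^ 2 / (L x) ^ (2 * b)` and `a n = √n * (log n) ^ b`. Since
`log (c * a x) = log x / 2 + o(log x)`, one gets `f (c * a n) = O(n)`, and `f` is increasing for
large arguments; so `E f(|X|) = ∞` forces `∑ P(|X| > c * a n) = ∞` for every `c > 0`. By the second
Borel–Cantelli lemma, almost surely `|X n| > c * a n` infinitely often for every `c`. As
`X n = S (n + 1) - S n` and `a (n + 1) ≤ D * a n`, each such `n` gives `|S m| ≥ c * a m / (1 + D)`
for `m = n` or `m = n + 1`.
-/

open MeasureTheory ProbabilityTheory Filter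

noncomputable def Lg (x : ℝ) : ℝ := Real.log (max (Real.exp 1) x)

open Real Finset

lemma one_le_Lg (x : ℝ) : 1 ≤ Lg x := by
  rw [← log_exp 1]
  exact log_le_log (exp_pos 1) (le_max_left _ _)

lemma Lg_pos (x : ℝ) : 0 < Lg x := one_pos.trans_le (one_le_Lg x)

lemma Lg_eq_log {x : ℝ} (hx : exp 1 ≤ x) : Lg x = log x := by
  rw [Lg, max_eq_right hx]

lemma continuous_Lg : Continuous Lg :=
  (continuous_const.max continuous_id).log fun _ =>
    ((exp_pos 1).trans_le (le_max_left _ _)).ne'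

lemma rpow_le_max_one_rpow_mul_rpow {u v t : ℝ} (s : ℝ) (hu : 0 < u) (huv : u ≤ v)
    (hvt : v ≤ t * u) : v ^ s ≤ max 1 (t ^ s) * u ^ s := by
  have hr : v = v / u * u := by field_simp
  rw [hr, mul_rpow (div_nonneg (hu.le.trans huv) hu.le) hu.le]
  gcongr
  rcases le_total 0 s with hs | hs
  · exact (rpow_le_rpow (div_nonneg (hu.le.trans huv) hu.le) ((div_le_iff₀ hu).2 hvt) hs).trans
      (le_max_right _ _)
  · exact (rpow_le_one_of_one_le_of_nonpos ((one_le_div hu).2 huv) hs).trans (le_max_left _ _)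

noncomputable def sqDivLg (b x : ℝ) : ℝ := x ^ 2 / Lg x ^ (2 * b)

lemma sqDivLg_nonneg (b x : ℝ) : 0 ≤ sqDivLg b x :=
  div_nonneg (sq_nonneg x) (rpow_nonneg (Lg_pos x).le _)

lemma continuous_sqDivLg (b : ℝ) : Continuous (sqDivLg b) :=
  (continuous_pow 2).div (continuous_Lg.rpow_const fun x => Or.inl (Lg_pos x).ne')
    fun x => (rpow_pos_of_pos (Lg_pos x) _).ne'

lemma sqDivLg_eq_exp (b : ℝ) {x : ℝ} (hx : exp 1 ≤ x) :
    sqDivLg b x = exp (2 * (log x - b * log (log x))) := by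
  have hx0 : 0 < x := (exp_pos 1).trans_le hx
  have hlog : 0 < log x := one_pos.trans_le ((le_log_iff_exp_le hx0).2 hx)
  rw [sqDivLg, Lg_eq_log hx, rpow_def_of_pos hlog, ← exp_log (pow_pos hx0 2), log_pow,
    ← exp_sub]
  congr 1
  push_cast
  ring

lemma mul_log_sub_log_le {b s t : ℝ} (hs : max 1 b ≤ s) (hst : s ≤ t) :
    b * (log t - log s) ≤ t - s := by
  have hs0 : 0 < s := one_pos.trans_le ((le_max_left 1 b).trans hs)
  have hlog : 0 ≤ log t - log s := sub_nonneg.2 (log_le_log hs0 hst)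
  calc b * (log t - log s) ≤ s * (log t - log s) :=
        mul_le_mul_of_nonneg_right ((le_max_right 1 b).trans hs) hlog
    _ = s * log (t / s) := by rw [log_div (hs0.trans_le hst).ne' hs0.ne']
    _ ≤ s * (t / s - 1) :=
        mul_le_mul_of_nonneg_left (log_le_sub_one_of_pos (div_pos (hs0.trans_le hst) hs0)) hs0.le
    _ = t - s := by field_simp

lemma monotoneOn_sqDivLg (b : ℝ) : MonotoneOn (sqDivLg b) (Set.Ici (exp (max 1 b))) := by
  intro x hx y hy hxy
  have he : exp 1 ≤ exp (max 1 b) := exp_le_exp.2 (le_max_left 1 b)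
  have hx0 : 0 < x := (exp_pos _).trans_le hx
  rw [sqDivLg_eq_exp b (he.trans hx), sqDivLg_eq_exp b (he.trans hy), exp_le_exp]
  have hs : max 1 b ≤ log x := (le_log_iff_exp_le hx0).2 hx
  have := mul_log_sub_log_le hs (log_le_log hx0 hxy)
  linarith

noncomputable def sqrtMulLogRpow (b x : ℝ) : ℝ := √x * log x ^ b

lemma sqrtMulLogRpow_pos (b : ℝ) {x : ℝ} (hx : 1 < x) : 0 < sqrtMulLogRpow b x :=
  mul_pos (sqrt_pos.2 (by linarith)) (rpow_pos_of_pos (log_pos hx) b)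

lemma sqrtMulLogRpow_add_one_le (b : ℝ) {x : ℝ} (hx : 2 ≤ x) :
    sqrtMulLogRpow b (x + 1) ≤ √2 * max 1 (2 ^ b) * sqrtMulLogRpow b x := by
  have hlog : 0 < log x := log_pos (by linarith)
  have hsqrt : √(x + 1) ≤ √2 * √x := by
    rw [← sqrt_mul zero_le_two]
    exact sqrt_le_sqrt (by linarith)
  have hlog_le : log (x + 1) ≤ 2 * log x := by
    calc log (x + 1) ≤ log (x ^ 2) := log_le_log (by linarith) (by nlinarith)
      _ = 2 * log x := by rw [log_pow, Nat.cast_two]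
  have hpow := rpow_le_max_one_rpow_mul_rpow b hlog (log_le_log (by linarith) (by linarith)) hlog_le
  calc √(x + 1) * log (x + 1) ^ b ≤ (√2 * √x) * (max 1 (2 ^ b) * log x ^ b) :=
        mul_le_mul hsqrt hpow (rpow_nonneg (log_nonneg (by linarith)) _) (by positivity)
    _ = _ := by rw [sqrtMulLogRpow]; ring

lemma eventually_abs_log_mul_sqrtMulLogRpow_sub_le (b : ℝ) {c : ℝ} (hc : 0 < c) :
    ∀ᶠ x in atTop, |log (c * sqrtMulLogRpow b x) - 2⁻¹ * log x| ≤ 4⁻¹ * log x := by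
  have hsmall : (fun t => log c + b * log t) =o[atTop] id :=
    (Asymptotics.isLittleO_const_id_atTop _).add (isLittleO_log_id_atTop.const_mul_left b)
  filter_upwards [(hsmall.comp_tendsto tendsto_log_atTop).bound (by norm_num : (0 : ℝ) < 4⁻¹),
    eventually_gt_atTop 1] with x hx hx1
  have hlog : 0 < log x := log_pos hx1
  rw [sqrtMulLogRpow, log_mul hc.ne' (by positivity), log_mul (by positivity) (by positivity),
    log_sqrt (by linarith), log_rpow hlog]
  simp only [Function.comp_apply, id, norm_eq_abs, abs_of_pos hlog] at hx
  convert hx using 2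
  ring

lemma sqDivLg_mul_sqrtMulLogRpow_le (b : ℝ) {c x : ℝ} (hc : 0 < c) (hx : 1 < x)
    (hA : 1 ≤ log (c * sqrtMulLogRpow b x)) (hAx : log (c * sqrtMulLogRpow b x) ≤ log x)
    (hxA : log x ≤ 4 * log (c * sqrtMulLogRpow b x)) :
    sqDivLg b (c * sqrtMulLogRpow b x) ≤ c ^ 2 * max 1 (4 ^ (2 * b)) * x := by
  set A := c * sqrtMulLogRpow b x
  have hlogx : 0 < log x := log_pos hx
  have hA0 : 0 < A := mul_pos hc (sqrtMulLogRpow_pos b hx)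
  have hsq : A ^ 2 = c ^ 2 * x * log x ^ (2 * b) := by
    rw [mul_comm 2 b, rpow_mul hlogx.le, rpow_two]
    simp only [A, sqrtMulLogRpow, mul_pow, sq_sqrt (by linarith : (0 : ℝ) ≤ x)]
    ring
  have hpow := rpow_le_max_one_rpow_mul_rpow (2 * b) (one_pos.trans_le hA) hAx hxA
  rw [sqDivLg, Lg_eq_log ((le_log_iff_exp_le hA0).1 hA), hsq,
    div_le_iff₀ (rpow_pos_of_pos (one_pos.trans_le hA) _)]
  calc c ^ 2 * x * log x ^ (2 * b) ≤ c ^ 2 * x * (max 1 (4 ^ (2 * b)) * log A ^ (2 * b)) := by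
        gcongr
    _ = _ := by ring

lemma exists_eventually_sqDivLg_le (b : ℝ) {c : ℝ} (hc : 0 < c) :
    ∃ K > 0, ∀ᶠ x in atTop, ∀ y ∈ Set.Icc 0 (c * sqrtMulLogRpow b x), sqDivLg b y ≤ K * x := by
  obtain ⟨C, hC⟩ := (isCompact_Icc (a := 0) (b := exp (max 1 b))).exists_bound_of_continuousOn
    (continuous_sqDivLg b).continuousOn
  set K := c ^ 2 * max 1 (4 ^ (2 * b))
  have hK : 0 < K := by positivity
  refine ⟨K, hK, ?_⟩
  filter_upwards [eventually_abs_log_mul_sqrtMulLogRpow_sub_le b hc, eventually_gt_atTop 1,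
    (tendsto_log_atTop.const_mul_atTop (by norm_num : (0 : ℝ) < 4⁻¹)).eventually_ge_atTop
      (max 1 b),
    (tendsto_id.const_mul_atTop hK).eventually_ge_atTop C] with x hA hx hlogx hCx
  rw [abs_le] at hA
  intro y ⟨hy0, hy⟩
  rcases le_total y (exp (max 1 b)) with hy1 | hy1
  · exact (le_abs_self _).trans ((hC y ⟨hy0, hy1⟩).trans hCx)
  · have hx₀ : exp (max 1 b) ≤ c * sqrtMulLogRpow b x :=
      (le_log_iff_exp_le (mul_pos hc (sqrtMulLogRpow_pos b hx))).1 (by linarith)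
    refine (monotoneOn_sqDivLg b hy1 hx₀ hy).trans
      (sqDivLg_mul_sqrtMulLogRpow_le b hc hx ?_ ?_ ?_) <;>
    linarith [le_max_left 1 b]

lemma tsum_ne_top_of_eventually_le {f g : ℕ → ENNReal} (hf : ∀ n, f n ≠ ⊤)
    (hfg : ∀ᶠ n in atTop, f n ≤ g n) (hg : ∑' n, g n ≠ ⊤) : ∑' n, f n ≠ ⊤ := by
  obtain ⟨N, hN⟩ := eventually_atTop.1 hfg
  rw [← ENNReal.summable.sum_add_tsum_nat_add' (k := N)]
  refine ENNReal.add_ne_top.2 ⟨ENNReal.sum_ne_top.2 fun n _ => hf n, ne_top_of_le_ne_top hg ?_⟩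
  calc ∑' n, f (n + N) ≤ ∑' n, g (n + N) := ENNReal.tsum_le_tsum fun n => hN _ (by omega)
    _ ≤ ∑' n, g n := ENNReal.tsum_comp_le_tsum_of_injective (add_left_injective N) g

section Integrability

variable {Ω : Type*} [MeasurableSpace Ω] {μ : Measure Ω}

lemma integrable_of_tsum_measure_lt_ne_top {Y : Ω → ℝ} (hY : Measurable Y) (hY0 : ∀ ω, 0 ≤ Y ω)
    {K : ℝ} (hK : 0 < K) (h : ∑' n : ℕ, μ {ω | K * n < Y ω} ≠ ⊤) : Integrable Y μ := by
  have hmeas (n : ℕ) : MeasurableSet {ω | K * n < Y ω} := measurableSet_lt measurable_const hY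
  have hY_le (ω : Ω) : ENNReal.ofReal (Y ω) ≤
      ∑' n : ℕ, {ω | K * n < Y ω}.indicator (fun _ => ENNReal.ofReal K) ω := by
    set m := ⌈Y ω / K⌉₊
    calc ENNReal.ofReal (Y ω) ≤ ENNReal.ofReal (m * K) :=
          ENNReal.ofReal_le_ofReal ((div_le_iff₀ hK).1 (Nat.le_ceil _))
      _ = ∑ n ∈ range m, ENNReal.ofReal K := by
          rw [sum_const, card_range, nsmul_eq_mul, ENNReal.ofReal_mul (Nat.cast_nonneg _),
            ENNReal.ofReal_natCast]
      _ = ∑ n ∈ range m, {ω | K * n < Y ω}.indicator (fun _ => ENNReal.ofReal K) ω := by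
          refine sum_congr rfl fun n hn => (Set.indicator_of_mem ?_ fun _ => ENNReal.ofReal K).symm
          rw [Set.mem_ofPred, mul_comm, ← lt_div_iff₀ hK]
          exact Nat.lt_ceil.1 (mem_range.1 hn)
      _ ≤ _ := ENNReal.sum_le_tsum _
  refine ⟨hY.aestronglyMeasurable, (hasFiniteIntegral_iff_ofReal (.of_forall hY0)).2 ?_⟩
  calc ∫⁻ ω, ENNReal.ofReal (Y ω) ∂μ
      ≤ ∫⁻ ω, ∑' n : ℕ, {ω | K * n < Y ω}.indicator (fun _ => ENNReal.ofReal K) ω ∂μ :=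
        lintegral_mono hY_le
    _ = ENNReal.ofReal K * ∑' n : ℕ, μ {ω | K * n < Y ω} := by
        rw [lintegral_tsum fun n => (measurable_const.indicator (hmeas n)).aemeasurable,
          ← ENNReal.tsum_mul_left]
        exact tsum_congr fun n => lintegral_indicator_const (hmeas n) _
    _ < ⊤ := ENNReal.mul_lt_top ENNReal.ofReal_lt_top h.lt_top

lemma integrable_sqDivLg_abs_of_tsum_ne_top [IsFiniteMeasure μ] (b : ℝ) {Z : Ω → ℝ}
    (hZ : Measurable Z) {c : ℝ} (hc : 0 < c)
    (h : ∑' n : ℕ, μ {ω | c * sqrtMulLogRpow b n < |Z ω|} ≠ ⊤) :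
    Integrable (fun ω => sqDivLg b |Z ω|) μ := by
  obtain ⟨K, hK, hbound⟩ := exists_eventually_sqDivLg_le b hc
  refine integrable_of_tsum_measure_lt_ne_top ((continuous_sqDivLg b).measurable.comp hZ.abs)
    (fun ω => sqDivLg_nonneg b _) hK
    (tsum_ne_top_of_eventually_le (fun n => measure_ne_top μ _) ?_ h)
  filter_upwards [tendsto_natCast_atTop_atTop.eventually hbound] with n hn
  refine measure_mono fun ω hω => ?_
  by_contra hle
  exact (hn |Z ω| ⟨abs_nonneg _, not_lt.1 hle⟩).not_gt hω

end Integrability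

lemma ae_frequently_mem_of_tsum_eq_top {Ω β : Type*} [MeasurableSpace Ω] [MeasurableSpace β]
    {μ : Measure Ω} {X : ℕ → Ω → β} (hX : ∀ n, Measurable (X n)) (hindep : iIndepFun X μ)
    (hident : ∀ n, IdentDistrib (X n) (X 0) μ μ) {B : ℕ → Set β} (hB : ∀ n, MeasurableSet (B n))
    (hsum : ∑' n, μ (X 0 ⁻¹' B n) = ⊤) : ∀ᵐ ω ∂μ, ∃ᶠ n in atTop, X n ω ∈ B n := by
  have := hindep.isProbabilityMeasure
  have hs (n : ℕ) : MeasurableSet (X n ⁻¹' B n) := hX n (hB n)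
  have hindep_sets : iIndepSet (fun n => X n ⁻¹' B n) μ :=
    (iIndepSet_iff_meas_biInter hs).2 fun t =>
      hindep.measure_inter_preimage_eq_mul t fun i _ => hB i
  have hlimsup := measure_limsup_eq_one hs hindep_sets
    (by simpa only [(hident _).measure_mem_eq (hB _)] using hsum)
  filter_upwards [(mem_ae_iff_prob_eq_one (MeasurableSet.measurableSet_limsup hs)).2 hlimsup]
    with ω hω
  exact mem_limsup_iff_frequently_mem.1 hω

lemma limsup_coe_eq_top_of_forall_frequently_le {α : Type*} {l : Filter α} {f : α → ℝ}
    (h : ∀ M : ℝ, ∃ᶠ x in l, M ≤ f x) : limsup (fun x => (f x : EReal)) l = ⊤ := by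
  refine (EReal.eq_top_iff_forall_lt _).2 fun M => ?_
  exact (EReal.coe_lt_coe_iff.2 (lt_add_one M)).trans_le
    (le_limsup_of_frequently_le' ((h (M + 1)).mono fun x hx => EReal.coe_le_coe_iff.2 hx))

lemma limsup_abs_sum_range_div_eq_top {u a : ℕ → ℝ} {D : ℝ} (ha : ∀ᶠ n in atTop, 0 < a n)
    (hD : ∀ᶠ n in atTop, a (n + 1) ≤ D * a n) (hu : ∀ k : ℕ, ∃ᶠ n in atTop, k * a n < |u n|) :
    limsup (fun n => ((|∑ i ∈ range n, u i| / a n : ℝ) : EReal)) atTop = ⊤ := by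
  refine limsup_coe_eq_top_of_forall_frequently_le fun M => ?_
  obtain ⟨k, hk⟩ := exists_nat_ge (|M| * (1 + D))
  set S := fun n => ∑ i ∈ range n, u i
  have hstep : ∃ᶠ n in atTop, M ≤ |S n| / a n ∨ M ≤ |S (n + 1)| / a (n + 1) := by
    have hgood := (ha.and ((tendsto_add_atTop_nat 1).eventually ha)).and hD
    refine ((hu k).and_eventually hgood).mono ?_
    rintro n ⟨hun, ⟨han, han1⟩, hDn⟩
    have hu_le : |u n| ≤ |S n| + |S (n + 1)| := by
      rw [show u n = S (n + 1) - S n by simp [S, sum_range_succ]]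
      exact (abs_sub _ _).trans_eq (add_comm _ _)
    by_contra! hsmall
    rw [div_lt_iff₀ han, div_lt_iff₀ han1] at hsmall
    have h1 : M * a (n + 1) ≤ |M| * (D * a n) :=
      (mul_le_mul_of_nonneg_right (le_abs_self M) han1.le).trans
        (mul_le_mul_of_nonneg_left hDn (abs_nonneg M))
    have h2 : M * a n ≤ |M| * a n := mul_le_mul_of_nonneg_right (le_abs_self M) han.le
    have h3 : |M| * (1 + D) * a n ≤ k * a n := mul_le_mul_of_nonneg_right hk han.le
    linarith
  exact (frequently_or_distrib.1 hstep).elim id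
    ((tendsto_add_atTop_nat 1).frequently (p := fun n => M ≤ |S n| / a n))

/-- **Step (4.3) in the proof of Theorem 2.1** (Li–Chen). For `b ∈ ℝ` and i.i.d. real
random variables `X_n` with `E (X² / (L|X|)^{2b}) = ∞`, one has
`limsup |S_n| / (√n (log n)^b) = ∞` a.s. -/
theorem stmt_19 {Ω : Type*} [MeasurableSpace Ω] (μ : Measure Ω) [IsProbabilityMeasure μ]
    (b : ℝ)
    (X : ℕ → Ω → ℝ) (hmeas : ∀ n, Measurable (X n))
    (hindep : iIndepFun X μ)
    (hident : ∀ n, IdentDistrib (X n) (X 0) μ μ)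
    (hninf : ¬ Integrable (fun ω => (X 0 ω) ^ 2 / (Lg |X 0 ω|) ^ (2 * b)) μ) :
    ∀ᵐ ω ∂μ,
      Filter.limsup (fun n : ℕ =>
        ((|∑ i ∈ Finset.range n, X i ω| / (Real.sqrt n * Real.log n ^ (b : ℝ)) : ℝ) : EReal))
        atTop = (⊤ : EReal) := by
  have hnot_int : ¬ Integrable (fun ω => sqDivLg b |X 0 ω|) μ := by
    simpa only [sqDivLg, sq_abs] using hninf
  have hfreq (k : ℕ) : ∀ᵐ ω ∂μ, ∃ᶠ n : ℕ in atTop, (k : ℝ) * sqrtMulLogRpow b n < |X n ω| := by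
    have hsum : ∑' n : ℕ, μ (X 0 ⁻¹' {x | (k + 1) * sqrtMulLogRpow b n < |x|}) = ⊤ := by
      by_contra h
      exact hnot_int (integrable_sqDivLg_abs_of_tsum_ne_top b (hmeas 0) k.cast_add_one_pos h)
    filter_upwards [ae_frequently_mem_of_tsum_eq_top hmeas hindep hident
      (fun n => measurableSet_lt measurable_const measurable_abs) hsum] with ω hω
    refine hω.mono fun n hn => lt_of_le_of_lt ?_ hn
    gcongr
    · exact mul_nonneg (sqrt_nonneg _) (rpow_nonneg (log_natCast_nonneg n) _)
    · linarith
  filter_upwards [ae_all_iff.2 hfreq] with ω hω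
  refine limsup_abs_sum_range_div_eq_top (D := √2 * max 1 (2 ^ b))
    (a := fun n : ℕ => sqrtMulLogRpow b n) ?_ ?_ hω
  · filter_upwards [eventually_ge_atTop 2] with n hn
    exact sqrtMulLogRpow_pos b (by exact_mod_cast hn)
  · filter_upwards [eventually_ge_atTop 2] with n hn
    exact_mod_cast sqrtMulLogRpow_add_one_le b (x := n) (by exact_mod_cast hn)
end
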